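/- If F_X is continuous and (X,Y) has copula C with (U,V) ∼ C, then for all y ∈ ℝ and α ∈ (0,1), P(Y ≤ y | X ≥ VaR_α(X)) = F_{V|U≥α}(F_Y(y)) = (F_Y(y) − C(α, F_Y(y)))/(1−α). -/

import Mathlib

open MeasureTheory Set

/-- Generalized inverse (left-continuous quantile function) F^←(p) = inf {x : F x ≥ p}. -/
noncomputable def qf (F : ℝ → ℝ) (p : ℝ) : ℝ := sInf {x | p ≤ F x}

/-- Distribution function of a random variable. -/
noncomputable def rvCdf {Ω : Type*} [MeasurableSpace Ω] (μ : Measure Ω) (X : Ω → ℝ) (x : ℝ) : ℝ :=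
  (μ {ω | X ω ≤ x}).toReal

/-! Continuity of `F_X` makes `q = VaR_α(X)` a genuine `α`-quantile, `F_X q = α`, and leaves no
atom at `q`. Hence `{X ≥ q}` is, up to a null set, the complement of `{X ≤ q}`, so
`P(Y ≤ y, X ≥ q) = F_Y y - P(X ≤ q, Y ≤ y) = F_Y y - C(α, F_Y y)` by Sklar and `P(X ≥ q) = 1 - α`.
The uniform `U` has no atom at `α` either, and the same computation on `(U, V)` gives the same
two numbers. -/

open ProbabilityTheory Filter Topology

theorem apply_qf_of_continuous {F : ℝ → ℝ} (hF : Continuous F) {α : ℝ}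
    (hne : {x | α ≤ F x}.Nonempty) (hbdd : BddBelow {x | α ≤ F x}) :
    F (qf F α) = α := by
  refine le_antisymm ?_ ((isClosed_le continuous_const hF).csInf_mem hne hbdd)
  have hbelow : ∀ x < qf F α, F x < α := fun x hx =>
    not_le.mp fun hαx => (csInf_le hbdd hαx).not_gt hx
  exact le_of_tendsto (hF.continuousAt.tendsto.mono_left (nhdsWithin_le_nhds (s := Iio _)))
    (eventually_nhdsWithin_of_forall fun x hx => (hbelow x hx).le)

theorem apply_qf_of_continuous_of_tendsto {F : ℝ → ℝ} (hF : Continuous F)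
    (hbot : Tendsto F atBot (𝓝 0)) (htop : Tendsto F atTop (𝓝 1)) {α : ℝ} (hα : α ∈ Ioo 0 1) :
    F (qf F α) = α := by
  refine apply_qf_of_continuous hF (htop.eventually (eventually_ge_nhds hα.2)).exists ?_
  obtain ⟨a, ha⟩ := eventually_atBot.mp (hbot.eventually (eventually_lt_nhds hα.1))
  exact ⟨a, fun x hx => le_of_not_ge fun hxa => (ha x hxa).not_ge hx⟩

section rvCdf

variable {Ω : Type*} [MeasurableSpace Ω] {μ : Measure Ω} {X : Ω → ℝ}

theorem rvCdf_eq_cdf_map [IsProbabilityMeasure μ] (hX : Measurable X) :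
    rvCdf μ X = cdf (μ.map X) := by
  have := Measure.isProbabilityMeasure_map (μ := μ) hX.aemeasurable
  ext x
  rw [cdf_eq_real, map_measureReal_apply hX measurableSet_Iic]
  rfl

theorem rvCdf_mem_Icc [IsProbabilityMeasure μ] (X : Ω → ℝ) (x : ℝ) : rvCdf μ X x ∈ Icc 0 1 :=
  ⟨measureReal_nonneg, measureReal_le_one⟩

theorem measure_eq_zero_of_continuousAt_rvCdf [IsProbabilityMeasure μ] (hX : Measurable X)
    {t : ℝ} (h : ContinuousAt (rvCdf μ X) t) : μ {ω | X ω = t} = 0 := by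
  have := Measure.isProbabilityMeasure_map (μ := μ) hX.aemeasurable
  rw [rvCdf_eq_cdf_map hX] at h
  have hmap : μ {ω | X ω = t} = (cdf (μ.map X)).measure {t} := by
    rw [measure_cdf, Measure.map_apply hX (measurableSet_singleton t)]
    rfl
  rw [hmap, StieltjesFunction.measure_singleton, h.continuousWithinAt.leftLim_eq, sub_self,
    ENNReal.ofReal_zero]

theorem rvCdf_apply_qf_of_continuous [IsProbabilityMeasure μ] (hX : Measurable X)
    (hcont : Continuous (rvCdf μ X)) {α : ℝ} (hα : α ∈ Ioo 0 1) :
    rvCdf μ X (qf (rvCdf μ X) α) = α := by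
  have := Measure.isProbabilityMeasure_map (μ := μ) hX.aemeasurable
  rw [rvCdf_eq_cdf_map hX] at hcont ⊢
  exact apply_qf_of_continuous_of_tendsto hcont (tendsto_cdf_atBot _) (tendsto_cdf_atTop _) hα

theorem measureReal_inter_setOf_le_eq_sub [IsFiniteMeasure μ] (hX : Measurable X) {t : ℝ}
    (hatom : μ {ω | X ω = t} = 0) (A : Set Ω) :
    μ.real (A ∩ {ω | t ≤ X ω}) = μ.real A - μ.real (A ∩ {ω | X ω ≤ t}) := by
  have hae : {ω | t ≤ X ω} =ᵐ[μ] {ω | t < X ω} := by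
    refine eventuallyEq_set.mpr ?_
    filter_upwards [measure_eq_zero_iff_ae_notMem.mp hatom] with ω hω
    exact ⟨fun h => lt_of_le_of_ne h (Ne.symm hω), le_of_lt⟩
  have hdiff : A ∩ {ω | t < X ω} = A \ {ω | X ω ≤ t} := by
    ext ω
    simp [not_le]
  rw [measureReal_congr (ae_eq_set_inter (EventuallyEq.refl _ A) hae), hdiff,
    ← measureReal_inter_add_sdiff (s := A) (measurableSet_le hX measurable_const)]
  ring

end rvCdf

theorem cond_cdf_given_var_excess_general
    {Ω Ω' : Type*} [MeasurableSpace Ω] [MeasurableSpace Ω']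
    (μ : Measure Ω) (ν : Measure Ω') [IsProbabilityMeasure μ] [IsProbabilityMeasure ν]
    (X Y : Ω → ℝ) (U V : Ω' → ℝ)
    (hX : Measurable X) (hU : Measurable U)
    (C : ℝ → ℝ → ℝ)
    (hFXcont : Continuous (rvCdf μ X))
    (hSklar : ∀ x y, (μ {ω | X ω ≤ x ∧ Y ω ≤ y}).toReal = C (rvCdf μ X x) (rvCdf μ Y y))
    (hUV : ∀ u ∈ Icc (0:ℝ) 1, ∀ v ∈ Icc (0:ℝ) 1,
      (ν {ω | U ω ≤ u ∧ V ω ≤ v}).toReal = C u v)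
    (hUunif : ∀ u ∈ Icc (0:ℝ) 1, (ν {ω | U ω ≤ u}).toReal = u)
    (hVunif : ∀ v ∈ Icc (0:ℝ) 1, (ν {ω | V ω ≤ v}).toReal = v)
    (y : ℝ) (α : ℝ) (hα : α ∈ Ioo (0:ℝ) 1) :
    (μ ({ω | Y ω ≤ y} ∩ {ω | qf (rvCdf μ X) α ≤ X ω})).toReal /
        (μ {ω | qf (rvCdf μ X) α ≤ X ω}).toReal
      = (ν ({ω | V ω ≤ rvCdf μ Y y} ∩ {ω | α ≤ U ω})).toReal /
          (ν {ω | α ≤ U ω}).toReal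
    ∧ (μ ({ω | Y ω ≤ y} ∩ {ω | qf (rvCdf μ X) α ≤ X ω})).toReal /
        (μ {ω | qf (rvCdf μ X) α ≤ X ω}).toReal
      = (rvCdf μ Y y - C α (rvCdf μ Y y)) / (1 - α) := by
  set q := qf (rvCdf μ X) α
  set p := rvCdf μ Y y
  have hα' : α ∈ Icc (0:ℝ) 1 := Ioo_subset_Icc_self hα
  have hp : p ∈ Icc (0:ℝ) 1 := rvCdf_mem_Icc Y y
  have hFq : rvCdf μ X q = α := rvCdf_apply_qf_of_continuous hX hFXcont hα
  have hatomX : μ {ω | X ω = q} = 0 :=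
    measure_eq_zero_of_continuousAt_rvCdf hX hFXcont.continuousAt
  have hatomU : ν {ω | U ω = α} = 0 :=
    measure_eq_zero_of_continuousAt_rvCdf hU <| continuousAt_id.congr <|
      eventually_of_mem (Icc_mem_nhds hα.1 hα.2) fun u hu => (hUunif u hu).symm
  have hdenX : μ.real {ω | q ≤ X ω} = 1 - α := by
    rw [← univ_inter {ω | q ≤ X ω}, measureReal_inter_setOf_le_eq_sub hX hatomX, univ_inter,
      probReal_univ, ← hFq]
    rfl
  have hdenU : ν.real {ω | α ≤ U ω} = 1 - α := by
    rw [← univ_inter {ω | α ≤ U ω}, measureReal_inter_setOf_le_eq_sub hU hatomU, univ_inter,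
      probReal_univ]
    exact congrArg (1 - ·) (hUunif α hα')
  have hnumX : μ.real ({ω | Y ω ≤ y} ∩ {ω | q ≤ X ω}) = p - C α p := by
    rw [measureReal_inter_setOf_le_eq_sub hX hatomX, ← hFq, ← hSklar, inter_comm]
    rfl
  have hnumU : ν.real ({ω | V ω ≤ p} ∩ {ω | α ≤ U ω}) = p - C α p := by
    rw [measureReal_inter_setOf_le_eq_sub hU hatomU, inter_comm]
    exact congr_arg₂ (· - ·) (hVunif p hp) (hUV α hα' p hp)
  simp only [← measureReal_def, hnumX, hnumU, hdenX, hdenU, and_self]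

/-- if F_X is continuous and (X,Y) has copula C with (U,V) ∼ C, then for all
y ∈ ℝ and α ∈ (0,1): P(Y ≤ y | X ≥ VaR_α(X)) = F_{V|U≥α}(F_Y(y))
= (F_Y(y) − C(α, F_Y(y)))/(1−α). -/
theorem cond_cdf_given_var_excess
    {Ω Ω' : Type*} [MeasurableSpace Ω] [MeasurableSpace Ω']
    (μ : Measure Ω) (ν : Measure Ω') [IsProbabilityMeasure μ] [IsProbabilityMeasure ν]
    (X Y : Ω → ℝ) (U V : Ω' → ℝ)
    (hX : Measurable X) (hY : Measurable Y) (hU : Measurable U) (hV : Measurable V)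
    (C : ℝ → ℝ → ℝ)
    (hFXcont : Continuous (rvCdf μ X))
    (hSklar : ∀ x y, (μ {ω | X ω ≤ x ∧ Y ω ≤ y}).toReal = C (rvCdf μ X x) (rvCdf μ Y y))
    (hUV : ∀ u ∈ Icc (0:ℝ) 1, ∀ v ∈ Icc (0:ℝ) 1,
      (ν {ω | U ω ≤ u ∧ V ω ≤ v}).toReal = C u v)
    (hUunif : ∀ u ∈ Icc (0:ℝ) 1, (ν {ω | U ω ≤ u}).toReal = u)
    (hVunif : ∀ v ∈ Icc (0:ℝ) 1, (ν {ω | V ω ≤ v}).toReal = v)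
    (y : ℝ) (α : ℝ) (hα : α ∈ Ioo (0:ℝ) 1) :
    (μ ({ω | Y ω ≤ y} ∩ {ω | qf (rvCdf μ X) α ≤ X ω})).toReal /
        (μ {ω | qf (rvCdf μ X) α ≤ X ω}).toReal
      = (ν ({ω | V ω ≤ rvCdf μ Y y} ∩ {ω | α ≤ U ω})).toReal /
          (ν {ω | α ≤ U ω}).toReal
    ∧ (μ ({ω | Y ω ≤ y} ∩ {ω | qf (rvCdf μ X) α ≤ X ω})).toReal /
        (μ {ω | qf (rvCdf μ X) α ≤ X ω}).toReal
      = (rvCdf μ Y y - C α (rvCdf μ Y y)) / (1 - α) :=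
  cond_cdf_given_var_excess_general μ ν X Y U V hX hU C hFXcont hSklar hUV hUunif hVunif y α hα
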